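/- Let σ : ℝ → ℝ be the logistic function σ(z) = (1 + exp(−z))⁻¹. Let T > 0, A ∈ ℝ, p ≥ 0 be real constants, and let β : ℝ → ℝ be differentiable with supremum of (p/T)·|β′(ε)| over ε ∈ [0,1] strictly less than 4. Define Φ(ε) = σ((A − p·β(ε))/T). Then Φ maps [0,1] into [0,1], Φ is Lipschitz on [0,1] with a Lipschitz constant strictly less than 1, and Φ has exactly one fixed point in [0,1]. -/

import Mathlib

/-!
Since `σ' = e^{-z}/(1 + e^{-z})² ≤ 1/4` and the argument `(A − p·β(ε))/T` is `L`-Lipschitz on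
`[0,1]` by the mean value theorem, `Φ` is an `L/4`-contraction of the complete set `[0,1]`, which
`σ` maps into itself; Banach's fixed point theorem gives the unique equilibrium.
-/

open Set

noncomputable def logistic (z : ℝ) : ℝ := (1 + Real.exp (-z))⁻¹

open scoped NNReal

theorem LipschitzOnWith.existsUnique_fixedPoint {α : Type*} [MetricSpace α] {K : ℝ≥0}
    {f : α → α} {s : Set α} (hsc : IsComplete s) (hs : s.Nonempty) (hsf : MapsTo f s s)
    (hK : K < 1) (hf : LipschitzOnWith K f s) : ∃! x, x ∈ s ∧ f x = x := by
  have hc : ContractingWith K (hsf.restrict f s s) := ⟨hK, fun x y ↦ hf x.2 y.2⟩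
  obtain ⟨x₀, hx₀⟩ := hs
  obtain ⟨x, hxs, hfx, -⟩ := hc.exists_fixedPoint' hsc hsf hx₀ (edist_ne_top _ _)
  refine ⟨x, ⟨hxs, hfx⟩, fun y ⟨hys, hfy⟩ ↦ ?_⟩
  exact congrArg Subtype.val
    (hc.fixedPoint_unique' (x := ⟨y, hys⟩) (y := ⟨x, hxs⟩) (Subtype.ext hfy) (Subtype.ext hfx))

theorem logistic_mem_Icc (z : ℝ) : logistic z ∈ Icc (0 : ℝ) 1 :=
  ⟨by unfold logistic; positivity,
    inv_le_one_of_one_le₀ (le_add_of_nonneg_right (Real.exp_pos _).le)⟩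

theorem hasDerivAt_logistic (z : ℝ) :
    HasDerivAt logistic (Real.exp (-z) / (1 + Real.exp (-z)) ^ 2) z := by
  have h : HasDerivAt (fun z ↦ 1 + Real.exp (-z)) (-Real.exp (-z)) z := by
    simpa using ((Real.hasDerivAt_exp (-z)).comp z (hasDerivAt_neg z)).const_add 1
  exact (h.inv (by positivity)).congr_deriv (by ring)

theorem lipschitzWith_logistic : LipschitzWith 4⁻¹ logistic := by
  refine lipschitzWith_of_nnnorm_deriv_le (fun z ↦ (hasDerivAt_logistic z).differentiableAt)
    fun z ↦ ?_
  rw [(hasDerivAt_logistic z).deriv, ← NNReal.coe_le_coe, coe_nnnorm, Real.norm_eq_abs,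
    abs_of_nonneg (by positivity), NNReal.coe_inv, NNReal.coe_ofNat, div_le_iff₀ (by positivity)]
  -- AM-GM: `4 e ≤ (1 + e)²`
  nlinarith [sq_nonneg (1 - Real.exp (-z))]

theorem lipschitzOnWith_of_abs_hasDerivAt_le {f f' : ℝ → ℝ} {s : Set ℝ} {C : ℝ}
    (hs : Convex ℝ s) (hf : ∀ x ∈ s, HasDerivAt f (f' x) x) (bound : ∀ x ∈ s, |f' x| ≤ C) :
    LipschitzOnWith C.toNNReal f s :=
  hs.lipschitzOnWith_of_nnnorm_hasDerivWithin_le (fun x hx ↦ (hf x hx).hasDerivWithinAt)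
    fun x hx ↦ by
      rw [← Real.toNNReal_coe (r := ‖f' x‖₊), coe_nnnorm, Real.norm_eq_abs]
      exact Real.toNNReal_le_toNNReal (bound x hx)

/-- Sufficient condition for uniqueness of the dispute-game equilibrium.
If the supremum of `(p/T)·|β′(ε)|` over `ε ∈ [0,1]` is strictly less than `4`
(witnessed by a bound `L < 4`), then the fixed-point map
`Φ(ε) = σ((A − p·β(ε))/T)` maps `[0,1]` into `[0,1]`, is Lipschitz on `[0,1]`
with some constant `K < 1`, and has exactly one fixed point in `[0,1]`. -/
theorem dispute_game_equilibrium_unique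
    (T : ℝ) (hT : 0 < T) (A : ℝ) (p : ℝ) (hp : 0 ≤ p)
    (β : ℝ → ℝ) (hβ : Differentiable ℝ β)
    (L : ℝ) (hL : L < 4)
    (hsup : ∀ ε ∈ Icc (0 : ℝ) 1, p / T * |deriv β ε| ≤ L)
    (Φ : ℝ → ℝ) (hΦ : ∀ ε, Φ ε = logistic ((A - p * β ε) / T)) :
    MapsTo Φ (Icc 0 1) (Icc 0 1) ∧
      (∃ K : NNReal, K < 1 ∧ LipschitzOnWith K Φ (Icc 0 1)) ∧
      ∃! εstar, εstar ∈ Icc (0 : ℝ) 1 ∧ Φ εstar = εstar := by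
  have hmaps : MapsTo Φ (Icc 0 1) (Icc 0 1) := fun ε _ ↦ hΦ ε ▸ logistic_mem_Icc _
  have harg : LipschitzOnWith L.toNNReal (fun ε ↦ (A - p * β ε) / T) (Icc 0 1) := by
    refine lipschitzOnWith_of_abs_hasDerivAt_le (convex_Icc 0 1)
      (fun ε _ ↦ (((hβ ε).hasDerivAt.const_mul p).const_sub A).div_const T) fun ε hε ↦ ?_
    rw [abs_div, abs_neg, abs_mul, abs_of_nonneg hp, abs_of_pos hT, mul_div_right_comm]
    exact hsup ε hε
  have hlip : LipschitzOnWith (4⁻¹ * L.toNNReal) Φ (Icc 0 1) := by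
    rw [funext hΦ]
    exact lipschitzWith_logistic.comp_lipschitzOnWith harg
  have hK : 4⁻¹ * L.toNNReal < 1 := by
    rw [inv_mul_lt_iff₀ (by norm_num), mul_one]
    exact Real.toNNReal_lt_ofNat.2 hL
  exact ⟨hmaps, ⟨_, hK, hlip⟩,
    hlip.existsUnique_fixedPoint isClosed_Icc.isComplete (nonempty_Icc.2 zero_le_one) hmaps hK⟩
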